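/- arXiv:1808.00566 — 4 statements merged into one kernel-verified Lean document; each statement's English description precedes it below -/
import Mathlib

section
/- Minimizing D(P∥P') over all distributions P' that factor according to a spanning tree on p vertices (with pairwise marginals equal to those of P) is equivalent to maximizing the sum Σ_{{i,j}∈E} I(X_i;X_j) of mutual information values over the edge set E of the tree. -/
open Finset Real

/-!
Taking the logarithm of the tree factorization splits `D(P‖P'_T)` into the multi-information
`∑ ω, P ω * log (P ω / ∏ i, P(ωᵢ))`, which does not depend on the tree, minus one term
`E_P[log (P(ωᵢ, ωⱼ) / (P(ωᵢ) P(ωⱼ)))]` per edge; summing the latter over the fibres of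
`ω ↦ (ωᵢ, ωⱼ)` turns it into the mutual information `I(Xᵢ; Xⱼ)`.
-/

theorem Finset.sum_mul_comp_eq_sum_sum_filter {Ω α β : Type*} [Fintype Ω] [Fintype α]
    [Fintype β] [DecidableEq α] [DecidableEq β] (P : Ω → ℝ) (u : Ω → α) (v : Ω → β)
    (f : α → β → ℝ) :
    ∑ ω, P ω * f (u ω) (v ω) =
      ∑ a, ∑ b, (∑ ω ∈ univ.filter (fun ω => u ω = a ∧ v ω = b), P ω) * f a b := by
  rw [← sum_fiberwise univ (fun ω => (u ω, v ω)), Fintype.sum_prod_type]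
  refine sum_congr rfl fun a _ => sum_congr rfl fun b _ => ?_
  rw [sum_mul]
  refine sum_congr (by ext ω; simp [Prod.ext_iff]) fun ω hω => ?_
  obtain ⟨-, rfl, rfl⟩ := mem_filter.1 hω
  rfl

theorem Real.log_div_mul_prod {ι : Type*} (s : Finset ι) {x y : ℝ} {r : ι → ℝ} (hx : x ≠ 0)
    (hy : y ≠ 0) (hr : ∀ i ∈ s, r i ≠ 0) :
    log (x / (y * ∏ i ∈ s, r i)) = log (x / y) - ∑ i ∈ s, log (r i) := by
  rw [div_mul_eq_div_div, log_div (div_ne_zero hx hy) (prod_ne_zero_iff.2 hr), log_prod hr]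

section TreeFactorization

variable {p : ℕ} {val : Fin p → Type*} [∀ i, Fintype (val i)] [∀ i, DecidableEq (val i)]
  {P : (∀ i, val i) → ℝ} {P1 : ∀ i, val i → ℝ} {P2 : ∀ i j, val i → val j → ℝ}

theorem sum_mul_log_pairRatio_eq_mutualInfo
    (hP2 : ∀ i j a b,
      P2 i j a b = ∑ ω ∈ univ.filter (fun ω : ∀ i, val i => ω i = a ∧ ω j = b), P ω)
    (i j : Fin p) :
    ∑ ω, P ω * log (P2 i j (ω i) (ω j) / (P1 i (ω i) * P1 j (ω j))) =
      ∑ a, ∑ b, P2 i j a b * log (P2 i j a b / (P1 i a * P1 j b)) := by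
  rw [sum_mul_comp_eq_sum_sum_filter P (fun ω => ω i) (fun ω => ω j)
    (fun a b => log (P2 i j a b / (P1 i a * P1 j b)))]
  simp only [hP2]

theorem sum_mul_log_div_treeProduct (hPpos : ∀ ω, 0 < P ω)
    (hP1 : ∀ i a, P1 i a = ∑ ω ∈ univ.filter (fun ω : ∀ i, val i => ω i = a), P ω)
    (hP2 : ∀ i j a b,
      P2 i j a b = ∑ ω ∈ univ.filter (fun ω : ∀ i, val i => ω i = a ∧ ω j = b), P ω)
    (E : Finset (Fin p × Fin p)) :
    ∑ ω, P ω * log (P ω /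
      ((∏ i, P1 i (ω i)) *
        ∏ e ∈ E, P2 e.1 e.2 (ω e.1) (ω e.2) / (P1 e.1 (ω e.1) * P1 e.2 (ω e.2)))) =
      ∑ ω, P ω * log (P ω / ∏ i, P1 i (ω i)) -
        ∑ e ∈ E, ∑ a, ∑ b, P2 e.1 e.2 a b * log (P2 e.1 e.2 a b / (P1 e.1 a * P1 e.2 b)) := by
  -- marginals are positive at the values of `ω`, since `ω` lies in its own fibre
  have hP1pos (ω : ∀ i, val i) (i : Fin p) : 0 < P1 i (ω i) := by
    rw [hP1]; exact sum_pos (fun ω _ => hPpos ω) ⟨ω, by simp⟩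
  have hP2pos (ω : ∀ i, val i) (i j : Fin p) : 0 < P2 i j (ω i) (ω j) := by
    rw [hP2]; exact sum_pos (fun ω _ => hPpos ω) ⟨ω, by simp⟩
  have hsplit (ω : ∀ i, val i) :
      log (P ω / ((∏ i, P1 i (ω i)) *
        ∏ e ∈ E, P2 e.1 e.2 (ω e.1) (ω e.2) / (P1 e.1 (ω e.1) * P1 e.2 (ω e.2)))) =
      log (P ω / ∏ i, P1 i (ω i)) -
        ∑ e ∈ E, log (P2 e.1 e.2 (ω e.1) (ω e.2) / (P1 e.1 (ω e.1) * P1 e.2 (ω e.2))) :=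
    log_div_mul_prod E (hPpos ω).ne' (prod_pos fun i _ => hP1pos ω i).ne' fun e _ =>
      (div_pos (hP2pos ω e.1 e.2) (mul_pos (hP1pos ω e.1) (hP1pos ω e.2))).ne'
  simp only [hsplit, mul_sub, mul_sum, sum_sub_distrib]
  rw [sum_comm (s := univ)]
  simp only [sum_mul_log_pairRatio_eq_mutualInfo hP2]

end TreeFactorization

theorem chow_liu_equivalence_general
    (p : ℕ) (val : Fin p → Type) [∀ i, Fintype (val i)] [∀ i, DecidableEq (val i)]
    (P : (∀ i, val i) → ℝ) (hPpos : ∀ ω, 0 < P ω)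
    (P1 : ∀ i, val i → ℝ)
    (hP1 : ∀ i a, P1 i a = ∑ ω ∈ univ.filter (fun ω : ∀ i, val i => ω i = a), P ω)
    (P2 : ∀ i j, val i → val j → ℝ)
    (hP2 : ∀ i j a b,
      P2 i j a b = ∑ ω ∈ univ.filter (fun ω : ∀ i, val i => ω i = a ∧ ω j = b), P ω)
    (D : Finset (Fin p × Fin p) → ℝ)
    (hD : ∀ E, D E = ∑ ω, P ω * Real.log (P ω /
      ((∏ i, P1 i (ω i)) *
        ∏ e ∈ E, P2 e.1 e.2 (ω e.1) (ω e.2) / (P1 e.1 (ω e.1) * P1 e.2 (ω e.2)))))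
    (MI : Finset (Fin p × Fin p) → ℝ)
    (hMI : ∀ E, MI E = ∑ e ∈ E, ∑ a, ∑ b,
      P2 e.1 e.2 a b * Real.log (P2 e.1 e.2 a b / (P1 e.1 a * P1 e.2 b)))
    (IsSpanningTree : Finset (Fin p × Fin p) → Prop) :
    ∃ C : ℝ, (∀ E, IsSpanningTree E → D E = C - MI E) ∧
      (∀ E₁ E₂, IsSpanningTree E₁ → IsSpanningTree E₂ → (D E₁ ≤ D E₂ ↔ MI E₂ ≤ MI E₁)) := by
  have hDMI (E : Finset (Fin p × Fin p)) :
      D E = (∑ ω, P ω * log (P ω / ∏ i, P1 i (ω i))) - MI E := by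
    rw [hD, hMI, sum_mul_log_div_treeProduct hPpos hP1 hP2]
  refine ⟨_, fun E _ => hDMI E, fun E₁ E₂ _ _ => ?_⟩
  rw [hDMI E₁, hDMI E₂, sub_le_sub_iff_left]

/-- Minimizing `D(P‖P'_T)` over spanning trees `T` is equivalent to
maximizing `∑_{{i,j}∈E} I(Xᵢ;Xⱼ)`: there is a constant `C` depending only on `P` such
that `D(P‖P'_T) = C - ∑_{{i,j}∈E} I(Xᵢ;Xⱼ)` for every spanning tree, and hence the KL
divergence comparison between two trees is the reversed comparison of their
mutual-information sums. -/
theorem chow_liu_equivalence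
    (p : ℕ) (val : Fin p → Type) [∀ i, Fintype (val i)] [∀ i, DecidableEq (val i)]
    (P : (∀ i, val i) → ℝ) (hPpos : ∀ ω, 0 < P ω) (hPsum : ∑ ω, P ω = 1)
    (P1 : ∀ i, val i → ℝ)
    (hP1 : ∀ i a, P1 i a = ∑ ω ∈ univ.filter (fun ω : ∀ i, val i => ω i = a), P ω)
    (P2 : ∀ i j, val i → val j → ℝ)
    (hP2 : ∀ i j a b,
      P2 i j a b = ∑ ω ∈ univ.filter (fun ω : ∀ i, val i => ω i = a ∧ ω j = b), P ω)
    (D : Finset (Fin p × Fin p) → ℝ)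
    (hD : ∀ E, D E = ∑ ω, P ω * Real.log (P ω /
      ((∏ i, P1 i (ω i)) *
        ∏ e ∈ E, P2 e.1 e.2 (ω e.1) (ω e.2) / (P1 e.1 (ω e.1) * P1 e.2 (ω e.2)))))
    (MI : Finset (Fin p × Fin p) → ℝ)
    (hMI : ∀ E, MI E = ∑ e ∈ E, ∑ a, ∑ b,
      P2 e.1 e.2 a b * Real.log (P2 e.1 e.2 a b / (P1 e.1 a * P1 e.2 b)))
    (IsSpanningTree : Finset (Fin p × Fin p) → Prop)
    (hST : ∀ E, IsSpanningTree E ↔ (∀ e ∈ E, e.1 < e.2) ∧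
      (SimpleGraph.fromRel (fun i j => (i, j) ∈ E ∨ (j, i) ∈ E)).IsTree) :
    ∃ C : ℝ, (∀ E, IsSpanningTree E → D E = C - MI E) ∧
      (∀ E₁ E₂, IsSpanningTree E₁ → IsSpanningTree E₂ → (D E₁ ≤ D E₂ ↔ MI E₂ ≤ MI E₁)) :=
  chow_liu_equivalence_general p val P hPpos P1 hP1 P2 hP2 D hD MI hMI IsSpanningTree
end

section
/- Using Stirling's approximation log Γ(z) = -z + (z - 1/2) log z + O(1), the negative log Bayes measure for a variable over α values with Dirichlet(1/2,...,1/2) prior satisfies -log Q^n = Σ_{x=0}^{α-1} c(x) log(n/c(x)) + ((α-1)/2) log n + O(1), uniformly over counts c(x) with Σ_x c(x) = n. -/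
/-!
Taking logarithms, `-log Qⁿ` is `log Γ(n + α/2) - ∑ₓ log Γ(c(x) + 1/2)` up to constants.
Stirling's formula `log Γ(x) = (x - 1/2) log x - x + O(1)` on `[1, ∞)` follows from the factorial
case by log-convexity of `Γ`, and gives `log Γ(x + a) = (x + a - 1/2) log x - x + O(1)` for each
fixed `a ≥ 0`. Applied with `a = α/2` and `a = 1/2`, the linear terms cancel because
`∑ₓ c(x) = n`, leaving `∑ₓ c(x) log (n / c(x)) + ((α - 1)/2) log n`.
-/

open Real Finset

lemma log_add_sub_log_le_div {x a : ℝ} (hx : 0 < x) (ha : 0 ≤ a) :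
    log (x + a) - log x ≤ a / x := by
  rw [← log_div (by linarith) hx.ne']
  calc log ((x + a) / x) ≤ (x + a) / x - 1 := log_le_sub_one_of_pos (by positivity)
    _ = a / x := by field_simp; ring

lemma div_add_le_log_add_sub_log {x a : ℝ} (hx : 0 < x) (ha : 0 ≤ a) :
    a / (x + a) ≤ log (x + a) - log x := by
  rw [← log_div (by linarith) hx.ne']
  calc a / (x + a) = 1 - ((x + a) / x)⁻¹ := by field_simp; ring
    _ ≤ log ((x + a) / x) := one_sub_inv_le_log_of_pos (by positivity)

lemma abs_mul_log_add_sub_log_sub_le {x a : ℝ} (b : ℝ) (hx : 0 < x) (ha : 0 ≤ a) :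
    |(x + b) * (log (x + a) - log x) - a| ≤ (a ^ 2 + |b| * a) / x := by
  have hupper := log_add_sub_log_le_div hx ha
  have hlower := div_add_le_log_add_sub_log hx ha
  set L := log (x + a) - log x
  have hxL : |x * L - a| ≤ a ^ 2 / x := by
    have h₁ : x * L ≤ a := by
      simpa [mul_div_cancel₀ a hx.ne'] using mul_le_mul_of_nonneg_left hupper hx.le
    have h₂ : a - a ^ 2 / x ≤ x * L :=
      calc a - a ^ 2 / x ≤ a - a ^ 2 / (x + a) := by gcongr; linarith
        _ = x * (a / (x + a)) := by field_simp; ring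
        _ ≤ x * L := mul_le_mul_of_nonneg_left hlower hx.le
    rw [abs_le]; constructor <;> linarith [div_nonneg (sq_nonneg a) hx.le]
  have hbL : |b * L| ≤ |b| * a / x := by
    rw [abs_mul, abs_of_nonneg (le_trans (by positivity) hlower), mul_div_assoc]
    exact mul_le_mul_of_nonneg_left hupper (abs_nonneg b)
  calc |(x + b) * L - a| = |(x * L - a) + b * L| := by ring_nf
    _ ≤ |x * L - a| + |b * L| := abs_add_le _ _
    _ ≤ a ^ 2 / x + |b| * a / x := add_le_add hxL hbL
    _ = (a ^ 2 + |b| * a) / x := by ring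

namespace Real

lemma log_Gamma_add_one {x : ℝ} (hx : 0 < x) :
    log (Gamma (x + 1)) = log (Gamma x) + log x := by
  rw [Gamma_add_one hx.ne', log_mul hx.ne' (Gamma_pos_of_pos hx).ne', add_comm]

lemma log_Gamma_add_le {x t : ℝ} (hx : 0 < x) (ht₀ : 0 ≤ t) (ht₁ : t ≤ 1) :
    log (Gamma (x + t)) ≤ log (Gamma x) + t * log x := by
  have h := convexOn_log_Gamma.2 (Set.mem_Ioi.2 hx) (Set.mem_Ioi.2 (by linarith : 0 < x + 1))
    (sub_nonneg.2 ht₁) ht₀ (by ring)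
  simp only [smul_eq_mul, Function.comp_apply, log_Gamma_add_one hx] at h
  rw [show (1 - t) * x + t * (x + 1) = x + t by ring] at h
  linarith

lemma le_log_Gamma_add {x t : ℝ} (hx : 0 < x) (ht₀ : 0 ≤ t) (ht₁ : t ≤ 1) :
    log (Gamma x) + log x - (1 - t) * log (x + t) ≤ log (Gamma (x + t)) := by
  have hxt : 0 < x + t := by linarith
  have h := convexOn_log_Gamma.2 (Set.mem_Ioi.2 hxt) (Set.mem_Ioi.2 (by linarith : 0 < x + t + 1))
    ht₀ (sub_nonneg.2 ht₁) (by ring)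
  simp only [smul_eq_mul, Function.comp_apply, log_Gamma_add_one hxt] at h
  rw [show t * (x + t) + (1 - t) * (x + t + 1) = x + 1 by ring, log_Gamma_add_one hx] at h
  linarith

lemma exists_abs_log_Gamma_nat_sub_stirling_le :
    ∃ K, ∀ n : ℕ, n ≠ 0 → |log (Gamma n) - ((n - 1 / 2) * log n - n)| ≤ K := by
  refine ⟨log (Stirling.stirlingSeq 1) + log 2 / 2, fun n hn => ?_⟩
  obtain ⟨m, rfl⟩ := Nat.exists_eq_succ_of_ne_zero hn
  have hm : (0 : ℝ) < m + 1 := by positivity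
  have hseq : log (Gamma (m + 1 : ℕ)) - (((m + 1 : ℕ) - 1 / 2) * log (m + 1 : ℕ) - (m + 1 : ℕ))
      = log (Stirling.stirlingSeq (m + 1)) + log 2 / 2 := by
    rw [Stirling.log_stirlingSeq_formula, Nat.factorial_succ, Nat.cast_succ, Gamma_nat_eq_factorial,
      Nat.cast_mul, log_mul (by positivity) (by positivity), log_mul two_ne_zero hm.ne',
      log_div hm.ne' (exp_pos 1).ne', log_exp]
    push_cast
    ring
  have hpos : 0 ≤ log (Stirling.stirlingSeq (m + 1)) := by
    refine log_nonneg (le_trans ?_ (Stirling.sqrt_pi_le_stirlingSeq m.succ_ne_zero))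
    exact one_le_sqrt.2 (by linarith [pi_gt_three])
  have hle : log (Stirling.stirlingSeq (m + 1)) ≤ log (Stirling.stirlingSeq 1) :=
    Stirling.log_stirlingSeq'_antitone (Nat.zero_le m)
  rw [hseq, abs_of_nonneg (by positivity)]
  linarith

lemma exists_abs_log_Gamma_sub_stirling_le :
    ∃ K, ∀ x : ℝ, 1 ≤ x → |log (Gamma x) - ((x - 1 / 2) * log x - x)| ≤ K := by
  obtain ⟨K, hK⟩ := exists_abs_log_Gamma_nat_sub_stirling_le
  refine ⟨1 + K + 2, fun x hx => ?_⟩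
  set n := ⌊x⌋₊
  set t := x - n
  have hn : 1 ≤ n := Nat.le_floor (by simpa using hx)
  have hn₀ : (0 : ℝ) < n := by positivity
  have hn₁ : (1 : ℝ) ≤ n := by exact_mod_cast hn
  have ht₀ : 0 ≤ t := sub_nonneg.2 (Nat.floor_le (by linarith))
  have ht₁ : t ≤ 1 := by linarith [Nat.lt_floor_add_one x]
  have hx' : x = n + t := by ring
  have hshift : log (n + t) - log n ≤ 1 :=
    (log_add_sub_log_le_div hn₀ ht₀).trans ((div_le_one hn₀).2 (by linarith))
  have hinterp : |log (Gamma (n + t)) - (log (Gamma n) + t * log n)| ≤ 1 := by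
    have := le_log_Gamma_add hn₀ ht₀ ht₁
    rw [abs_le]; constructor <;> nlinarith [log_Gamma_add_le hn₀ ht₀ ht₁]
  have hcorr : |(n + (t - 1 / 2)) * (log (n + t) - log n) - t| ≤ 2 := by
    refine (abs_mul_log_add_sub_log_sub_le (t - 1 / 2) hn₀ ht₀).trans ?_
    rw [div_le_iff₀ hn₀]
    have : |t - 1 / 2| ≤ 1 := abs_le.2 ⟨by linarith, by linarith⟩
    nlinarith [abs_nonneg (t - 1 / 2)]
  have hsplit : log (Gamma x) - ((x - 1 / 2) * log x - x)
      = (log (Gamma (n + t)) - (log (Gamma n) + t * log n))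
        + (log (Gamma n) - ((n - 1 / 2) * log n - n))
        - ((n + (t - 1 / 2)) * (log (n + t) - log n) - t) := by
    rw [hx']; ring
  rw [hsplit]
  exact (abs_sub _ _).trans
    (add_le_add ((abs_add_le _ _).trans (add_le_add hinterp (hK n (by omega)))) hcorr)

lemma exists_abs_log_Gamma_add_sub_stirling_le {a : ℝ} (ha : 0 ≤ a) :
    ∃ K, ∀ x : ℝ, 1 ≤ x → |log (Gamma (x + a)) - ((x + a - 1 / 2) * log x - x)| ≤ K := by
  obtain ⟨K, hK⟩ := exists_abs_log_Gamma_sub_stirling_le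
  refine ⟨K + (a ^ 2 + |a - 1 / 2| * a), fun x hx => ?_⟩
  have hsplit : log (Gamma (x + a)) - ((x + a - 1 / 2) * log x - x)
      = (log (Gamma (x + a)) - ((x + a - 1 / 2) * log (x + a) - (x + a)))
        + ((x + (a - 1 / 2)) * (log (x + a) - log x) - a) := by ring
  rw [hsplit]
  refine (abs_add_le _ _).trans (add_le_add (hK _ (by linarith)) ?_)
  exact (abs_mul_log_add_sub_log_sub_le _ (by linarith) ha).trans
    (div_le_self (by positivity) hx)

lemma exists_abs_log_Gamma_nat_add_half_sub_le :
    ∃ K, ∀ m : ℕ, |log (Gamma (m + 1 / 2)) - (m * log m - m)| ≤ K := by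
  obtain ⟨K, hK⟩ := exists_abs_log_Gamma_add_sub_stirling_le (a := 1 / 2) (by norm_num)
  refine ⟨max K |log (Gamma (1 / 2))|, fun m => ?_⟩
  rcases Nat.eq_zero_or_pos m with rfl | hm
  · simp
  · have := hK m (by exact_mod_cast hm)
    rw [add_sub_cancel_right] at this
    exact this.trans (le_max_left _ _)

lemma neg_log_Gamma_div_mul_prod_Gamma_div {ι : Type*} (s : Finset ι) {a b r : ℝ}
    {u : ι → ℝ} (ha : 0 < a) (hb : 0 < b) (hr : 0 < r) (hu : ∀ i ∈ s, 0 < u i) :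
    -log (Gamma a / Gamma b * ∏ i ∈ s, Gamma (u i) / Gamma r)
      = log (Gamma b) - log (Gamma a) - ∑ i ∈ s, (log (Gamma (u i)) - log (Gamma r)) := by
  have hΓ : ∀ y : ℝ, 0 < y → Gamma y ≠ 0 := fun y hy => (Gamma_pos_of_pos hy).ne'
  rw [log_mul (div_ne_zero (hΓ a ha) (hΓ b hb)) (prod_ne_zero_iff.2 fun i hi =>
      div_ne_zero (hΓ _ (hu i hi)) (hΓ r hr)),
    log_div (hΓ a ha) (hΓ b hb), log_prod fun i hi => div_ne_zero (hΓ _ (hu i hi)) (hΓ r hr),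
    sum_congr rfl fun i hi => log_div (hΓ _ (hu i hi)) (hΓ r hr)]
  ring

end Real

lemma Finset.sum_mul_log_div {ι : Type*} (s : Finset ι) (c : ι → ℝ) {n : ℝ} (hn : n ≠ 0) :
    ∑ i ∈ s, c i * log (n / c i) = (∑ i ∈ s, c i) * log n - ∑ i ∈ s, c i * log (c i) := by
  rw [Finset.sum_mul, ← Finset.sum_sub_distrib]
  refine Finset.sum_congr rfl fun i _ => ?_
  rcases eq_or_ne (c i) 0 with hc | hc
  · simp [hc]
  · rw [log_div hn hc]; ring

theorem neg_log_bayes_measure_asymptotics_general (α : ℕ) :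
    ∃ C : ℝ, ∀ n : ℕ, 1 ≤ n → ∀ c : Fin α → ℕ, ∑ x, c x = n →
      |(-Real.log (Real.Gamma (α / 2) / Real.Gamma (n + α / 2) *
            ∏ x, Real.Gamma (c x + 1/2) / Real.Gamma (1/2)))
        - ((∑ x, (c x : ℝ) * Real.log ((n : ℝ) / (c x : ℝ)))
            + ((α : ℝ) - 1) / 2 * Real.log n)| ≤ C := by
  obtain ⟨K₁, hK₁⟩ := exists_abs_log_Gamma_add_sub_stirling_le (a := α / 2) (by positivity)
  obtain ⟨K₂, hK₂⟩ := exists_abs_log_Gamma_nat_add_half_sub_le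
  refine ⟨K₁ + α * K₂ + |log (Gamma (α / 2))| + α * |log (Gamma (1 / 2))|, ?_⟩
  intro n hn c hc
  have hα : 0 < α := Nat.pos_of_ne_zero (by rintro rfl; simp at hc; omega)
  have hn₀ : (n : ℝ) ≠ 0 := by positivity
  have hcast : ∑ x, (c x : ℝ) = n := by exact_mod_cast hc
  have hsplit : (log (Gamma (n + α / 2)) - log (Gamma (α / 2))
        - ∑ x, (log (Gamma (c x + 1 / 2)) - log (Gamma (1 / 2))))
        - ((n * log n - ∑ x, (c x : ℝ) * log (c x)) + ((α : ℝ) - 1) / 2 * log n)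
      = (log (Gamma (n + α / 2)) - ((n + α / 2 - 1 / 2) * log n - n))
        - ∑ x, (log (Gamma (c x + 1 / 2)) - (c x * log (c x) - c x))
        - log (Gamma (α / 2)) + α * log (Gamma (1 / 2)) := by
    simp only [sum_sub_distrib, hcast, sum_const, card_univ, Fintype.card_fin, nsmul_eq_mul]
    ring
  have hcounts : |∑ x, (log (Gamma (c x + 1 / 2)) - (c x * log (c x) - c x))| ≤ α * K₂ :=
    (abs_sum_le_sum_abs _ _).trans <| (sum_le_card_nsmul _ _ _ fun x _ => hK₂ (c x)).trans
      (by simp)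
  rw [neg_log_Gamma_div_mul_prod_Gamma_div _ (by positivity) (by positivity) one_half_pos
      fun x _ => by positivity, sum_mul_log_div _ _ hn₀, hcast, hsplit]
  refine (abs_add_le _ _).trans (add_le_add ((abs_sub _ _).trans (add_le_add ?_ le_rfl)) ?_)
  · exact (abs_sub _ _).trans (add_le_add (hK₁ n (by exact_mod_cast hn)) hcounts)
  · rw [abs_mul, Nat.abs_cast]

/-- For the Bayes measure with Dirichlet(1/2,…,1/2) prior over an alphabet
of size `α`, `-log Qⁿ = ∑_x c(x) log(n/c(x)) + ((α-1)/2) log n + O(1)`, uniformly over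
all counts `c` with `∑_x c(x) = n`. (Terms with `c(x) = 0` vanish since in Lean
`n/0 = 0` and `log 0 = 0`.) -/
theorem neg_log_bayes_measure_asymptotics (α : ℕ) (hα : 2 ≤ α) :
    ∃ C : ℝ, ∀ n : ℕ, 1 ≤ n → ∀ c : Fin α → ℕ, ∑ x, c x = n →
      |(-Real.log (Real.Gamma (α / 2) / Real.Gamma (n + α / 2) *
            ∏ x, Real.Gamma (c x + 1/2) / Real.Gamma (1/2)))
        - ((∑ x, (c x : ℝ) * Real.log ((n : ℝ) / (c x : ℝ)))
            + ((α : ℝ) - 1) / 2 * Real.log n)| ≤ C :=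
  neg_log_bayes_measure_asymptotics_general α
end

section
/- For Bayes measures with Jeffreys (Dirichlet-1/2) priors over finite alphabets of sizes α, β, and αβ, the log Bayes factor satisfies log[Q^n(i,j)/(Q^n(i)Q^n(j))] = n·I^n(i,j) - ((α-1)(β-1)/2) log n + O(1), where I^n(i,j) is the empirical mutual information of the pair from n samples. -/
/-!
Write `log Γ(x + a) = x log x - x + (a - 1/2) log x + R_a(x)`. Along the integers the remainder
`R_a(n)` converges (to `log √(2π)`, by Stirling's formula for `n!` and the Euler limit formula
for `Γ`), so it is bounded. Applying this to every count with `a = 1/2` and to `n` with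
`a = κ/2` gives, uniformly in the counts `c` of an alphabet of size `κ`,
`log Qⁿ(c) = ∑ c log c - n log n - (κ - 1)/2 · log n + O(1)`.
In the log Bayes factor the entropy terms combine to `n Iⁿ`, and the penalties to
`(αβ - 1) - (α - 1) - (β - 1) = (α - 1)(β - 1)`.
-/

open Real Finset Filter Topology
open scoped Nat

lemma exists_forall_abs_le_of_tendsto {u : ℕ → ℝ} {l : ℝ} (h : Tendsto u atTop (𝓝 l)) :
    ∃ C, ∀ n, |u n| ≤ C := by
  obtain ⟨C, hC⟩ := isBounded_iff_forall_norm_le.1 (Metric.isBounded_range_of_tendsto u h)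
  exact ⟨C, fun n => hC _ (Set.mem_range_self n)⟩

lemma tendsto_log_factorial_sub_stirling :
    Tendsto (fun n : ℕ => log n ! - (n * log n - n + log n / 2)) atTop
      (𝓝 (log √(2 * π))) := by
  have hlim : log √(2 * π) = log √π + log 2 / 2 := by
    rw [sqrt_mul zero_le_two, log_mul (by positivity) (by positivity), log_sqrt zero_le_two]
    ring
  rw [hlim]
  refine ((Stirling.tendsto_stirlingSeq_sqrt_pi.log (by positivity)).add_const _).congr' ?_
  filter_upwards [eventually_ne_atTop 0] with n hn
  have hn' : (n : ℝ) ≠ 0 := Nat.cast_ne_zero.2 hn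
  rw [Stirling.log_stirlingSeq_formula, log_mul two_ne_zero hn', log_div hn' (exp_ne_zero 1),
    log_exp]
  ring

lemma tendsto_log_Gamma_nat_add_one_add_sub {a : ℝ} (ha : 0 < a) :
    Tendsto (fun n : ℕ => log (Gamma (n + 1 + a)) - log n ! - a * log n) atTop (𝓝 0) := by
  have hfeq : ∀ {y : ℝ}, 0 < y → (log ∘ Gamma) (y + 1) = (log ∘ Gamma) y + log y := fun hy => by
    rw [Function.comp_apply, Gamma_add_one hy.ne', log_mul hy.ne' (Gamma_pos_of_pos hy).ne',
      add_comm, Function.comp_apply]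
  have := (BohrMollerup.tendsto_log_gamma ha).const_sub (log (Gamma a))
  rw [sub_self] at this
  refine this.congr fun n => ?_
  have hsum := BohrMollerup.f_add_nat_eq hfeq ha (n + 1)
  simp only [Function.comp_apply, Nat.cast_add, Nat.cast_one] at hsum
  rw [BohrMollerup.logGammaSeq, show (n : ℝ) + 1 + a = a + (n + 1) by ring, hsum]
  ring

lemma tendsto_log_nat_add_sub_log (a : ℝ) :
    Tendsto (fun n : ℕ => log (n + a) - log n) atTop (𝓝 0) := by
  have := ((tendsto_const_div_atTop_nhds_zero_nat a).const_add 1).log (by norm_num)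
  rw [add_zero, log_one] at this
  refine this.congr' ?_
  filter_upwards [eventually_gt_atTop ⌈-a⌉₊, eventually_ne_atTop 0] with n hna hn
  have hn' : (n : ℝ) ≠ 0 := Nat.cast_ne_zero.2 hn
  have hna' : (n : ℝ) + a ≠ 0 := (by linarith [Nat.lt_of_ceil_lt hna] : 0 < (n : ℝ) + a).ne'
  rw [← log_div hna' hn', add_div, div_self hn']

noncomputable def logGammaStirlingRemainder (a x : ℝ) : ℝ :=
  log (Gamma (x + a)) - (x * log x - x + (a - 1 / 2) * log x)

lemma tendsto_logGammaStirlingRemainder {a : ℝ} (ha : 0 < a) :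
    Tendsto (fun n : ℕ => logGammaStirlingRemainder a n) atTop (𝓝 (log √(2 * π))) := by
  have := ((tendsto_log_Gamma_nat_add_one_add_sub ha).add tendsto_log_factorial_sub_stirling).sub
    (tendsto_log_nat_add_sub_log a)
  rw [zero_add, sub_zero] at this
  refine this.congr fun n => ?_
  have hpos : (0 : ℝ) < n + a := by positivity
  rw [logGammaStirlingRemainder, add_right_comm, Gamma_add_one hpos.ne',
    log_mul hpos.ne' (Gamma_pos_of_pos hpos).ne']
  ring

lemma exists_forall_abs_logGammaStirlingRemainder_le {a : ℝ} (ha : 0 < a) :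
    ∃ C, ∀ n : ℕ, |logGammaStirlingRemainder a n| ≤ C :=
  exists_forall_abs_le_of_tendsto (tendsto_logGammaStirlingRemainder ha)

/-- `Qⁿ` of a sequence of length `n` with letter counts `c`: the Dirichlet(1/2, …, 1/2)
mixture of i.i.d. laws on the alphabet `ι`. -/
noncomputable def jeffreysMarginal {ι : Type*} [Fintype ι] (n : ℕ) (c : ι → ℕ) : ℝ :=
  Gamma (Fintype.card ι / 2) / Gamma (n + Fintype.card ι / 2) *
    ∏ z, Gamma (c z + 1 / 2) / Gamma (1 / 2)

section JeffreysMarginal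

variable {ι : Type*} [Fintype ι] [Nonempty ι]

lemma jeffreysMarginal_pos (n : ℕ) (c : ι → ℕ) : 0 < jeffreysMarginal n c := by
  unfold jeffreysMarginal
  have : (0 : ℝ) < Fintype.card ι := by exact_mod_cast Fintype.card_pos
  positivity

lemma log_jeffreysMarginal_sub {n : ℕ} {c : ι → ℕ} (hc : ∑ z, c z = n) :
    log (jeffreysMarginal n c) -
        (∑ z, c z * log (c z) - n * log n - (Fintype.card ι - 1) / 2 * log n) =
      (log (Gamma (Fintype.card ι / 2)) - Fintype.card ι * log (Gamma (1 / 2)))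
        - logGammaStirlingRemainder (Fintype.card ι / 2) n
        + ∑ z, logGammaStirlingRemainder (1 / 2) (c z) := by
  have hκ : (0 : ℝ) < Fintype.card ι := by exact_mod_cast Fintype.card_pos
  have hcR : ∑ z, (c z : ℝ) = n := by exact_mod_cast hc
  unfold jeffreysMarginal logGammaStirlingRemainder
  rw [log_mul (by positivity) (by positivity), log_div (by positivity) (by positivity),
    log_prod fun z _ => (by positivity : Gamma (c z + 1 / 2) / Gamma (1 / 2) ≠ 0)]
  simp only [fun z => log_div (Gamma_pos_of_pos (by positivity : (0:ℝ) < c z + 1 / 2)).ne'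
    (Gamma_pos_of_pos one_half_pos).ne', sum_sub_distrib, hcR,
    sub_self, zero_mul, add_zero, sum_const, card_univ, nsmul_eq_mul]
  ring

lemma exists_abs_log_jeffreysMarginal_sub_le :
    ∃ C, ∀ (n : ℕ) (c : ι → ℕ), ∑ z, c z = n →
      |log (jeffreysMarginal n c) -
        (∑ z, c z * log (c z) - n * log n - (Fintype.card ι - 1) / 2 * log n)| ≤ C := by
  have hκ : (0 : ℝ) < Fintype.card ι / 2 := by
    have : (0 : ℝ) < Fintype.card ι := by exact_mod_cast Fintype.card_pos
    positivity
  obtain ⟨C₁, hC₁⟩ := exists_forall_abs_logGammaStirlingRemainder_le hκ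
  obtain ⟨C₂, hC₂⟩ := exists_forall_abs_logGammaStirlingRemainder_le one_half_pos
  refine ⟨|log (Gamma (Fintype.card ι / 2)) - Fintype.card ι * log (Gamma (1 / 2))| + C₁
    + Fintype.card ι * C₂, fun n c hc => ?_⟩
  rw [log_jeffreysMarginal_sub hc]
  -- empty cells need no special case: the remainder is bounded on all of `ℕ`, including `0`
  have hsum : |∑ z, logGammaStirlingRemainder (1 / 2) (c z)| ≤ Fintype.card ι * C₂ :=
    calc _ ≤ ∑ z, |logGammaStirlingRemainder (1 / 2) (c z)| := abs_sum_le_sum_abs _ _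
      _ ≤ ∑ _z : ι, C₂ := sum_le_sum fun z _ => hC₂ (c z)
      _ = Fintype.card ι * C₂ := by rw [sum_const, card_univ, nsmul_eq_mul]
  exact (abs_add_le _ _).trans (add_le_add ((abs_sub _ _).trans (by gcongr; exact hC₁ n)) hsum)

end JeffreysMarginal

lemma natCast_mul_div_mul_log_div_eq {a b₁ b₂ n : ℕ} (h₁ : a ≤ b₁) (h₂ : a ≤ b₂) (hn : a ≤ n) :
    (n : ℝ) * ((a / n) * log ((a / n) / ((b₁ / n) * (b₂ / n)))) =
      a * log a - a * log b₁ - a * log b₂ + a * log n := by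
  rcases Nat.eq_zero_or_pos a with rfl | ha
  · simp
  have hpos : ∀ {b : ℕ}, a ≤ b → (0 : ℝ) < b := fun hb => by exact_mod_cast ha.trans_le hb
  have ha' := hpos le_rfl
  have hn' := hpos hn
  have hb₁ := hpos h₁
  have hb₂ := hpos h₂
  have hratio : (a / n) / ((b₁ / n) * (b₂ / n)) = a * n / (b₁ * b₂ : ℝ) := by
    field_simp
  rw [hratio, log_div (by positivity) (by positivity), log_mul ha'.ne' hn'.ne',
    log_mul hb₁.ne' hb₂.ne']
  field_simp
  ring

section MutualInformation

variable {ι κ : Type*} [Fintype ι] [Fintype κ] {n : ℕ} {c : ι × κ → ℕ} {c₁ : ι → ℕ} {c₂ : κ → ℕ}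

lemma sum_eq_of_marginal_left (hc : ∑ z, c z = n) (hc₁ : ∀ x, c₁ x = ∑ y, c (x, y)) :
    ∑ x, c₁ x = n := by
  rw [← hc, Fintype.sum_prod_type]
  exact sum_congr rfl fun x _ => hc₁ x

lemma sum_eq_of_marginal_right (hc : ∑ z, c z = n) (hc₂ : ∀ y, c₂ y = ∑ x, c (x, y)) :
    ∑ y, c₂ y = n := by
  rw [← hc, Fintype.sum_prod_type_right]
  exact sum_congr rfl fun y _ => hc₂ y

lemma natCast_mul_empiricalMutualInfo_eq (hc : ∑ z, c z = n)
    (hc₁ : ∀ x, c₁ x = ∑ y, c (x, y)) (hc₂ : ∀ y, c₂ y = ∑ x, c (x, y)) :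
    (n : ℝ) * ∑ x, ∑ y, ((c (x, y) : ℝ) / n) *
        log (((c (x, y) : ℝ) / n) / (((c₁ x : ℝ) / n) * ((c₂ y : ℝ) / n))) =
      ∑ z, c z * log (c z) - ∑ x, c₁ x * log (c₁ x) - ∑ y, c₂ y * log (c₂ y) + n * log n := by
  have hle : ∀ x y, c (x, y) ≤ c₁ x ∧ c (x, y) ≤ c₂ y ∧ c (x, y) ≤ n := fun x y =>
    ⟨hc₁ x ▸ single_le_sum (f := fun y => c (x, y)) (fun _ _ => Nat.zero_le _) (mem_univ y),
      hc₂ y ▸ single_le_sum (f := fun x => c (x, y)) (fun _ _ => Nat.zero_le _) (mem_univ x),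
      hc ▸ single_le_sum (fun _ _ => Nat.zero_le _) (mem_univ (x, y))⟩
  simp only [mul_sum, fun x y => natCast_mul_div_mul_log_div_eq (hle x y).1 (hle x y).2.1
    (hle x y).2.2, sum_add_distrib, sum_sub_distrib, ← sum_mul]
  have hrow : ∀ x, ∑ y, (c (x, y) : ℝ) = c₁ x := fun x => by rw [hc₁ x, Nat.cast_sum]
  have hcol : ∀ y, ∑ x, (c (x, y) : ℝ) = c₂ y := fun y => by rw [hc₂ y, Nat.cast_sum]
  have htotal : ∑ x, ∑ y, (c (x, y) : ℝ) = n := by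
    rw [← Fintype.sum_prod_type (fun z => (c z : ℝ)), ← hc, Nat.cast_sum]
  rw [sum_comm (f := fun x y => (c (x, y) : ℝ) * log (c₂ y)), ← Fintype.sum_prod_type
    (fun z => (c z : ℝ) * log (c z)), htotal]
  simp only [← sum_mul, hrow, hcol]

end MutualInformation

theorem exists_abs_log_jeffreys_bayes_factor_sub_le {ι κ : Type*} [Fintype ι] [Fintype κ]
    [Nonempty ι] [Nonempty κ] :
    ∃ C, ∀ (n : ℕ) (c : ι × κ → ℕ), ∑ z, c z = n →
      ∀ c₁ : ι → ℕ, (∀ x, c₁ x = ∑ y, c (x, y)) →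
      ∀ c₂ : κ → ℕ, (∀ y, c₂ y = ∑ x, c (x, y)) →
      |log (jeffreysMarginal n c / (jeffreysMarginal n c₁ * jeffreysMarginal n c₂))
        - ((n : ℝ) * ∑ x, ∑ y, ((c (x, y) : ℝ) / n) *
              log (((c (x, y) : ℝ) / n) / (((c₁ x : ℝ) / n) * ((c₂ y : ℝ) / n)))
            - (Fintype.card ι - 1) * (Fintype.card κ - 1) / 2 * log n)| ≤ C := by
  obtain ⟨C, hC⟩ := exists_abs_log_jeffreysMarginal_sub_le (ι := ι × κ)
  obtain ⟨C₁, hC₁⟩ := exists_abs_log_jeffreysMarginal_sub_le (ι := ι)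
  obtain ⟨C₂, hC₂⟩ := exists_abs_log_jeffreysMarginal_sub_le (ι := κ)
  refine ⟨C + C₁ + C₂, fun n c hc c₁ hc₁ c₂ hc₂ => ?_⟩
  have h := hC n c hc
  have h₁ := hC₁ n c₁ (sum_eq_of_marginal_left hc hc₁)
  have h₂ := hC₂ n c₂ (sum_eq_of_marginal_right hc hc₂)
  rw [log_div (jeffreysMarginal_pos n c).ne'
      (mul_pos (jeffreysMarginal_pos n c₁) (jeffreysMarginal_pos n c₂)).ne',
    log_mul (jeffreysMarginal_pos n c₁).ne' (jeffreysMarginal_pos n c₂).ne',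
    natCast_mul_empiricalMutualInfo_eq hc hc₁ hc₂]
  rw [Fintype.card_prod, Nat.cast_mul] at h
  rw [abs_le] at h h₁ h₂ ⊢
  constructor <;> linarith [h.1, h.2, h₁.1, h₁.2, h₂.1, h₂.2]

/-- For Bayes measures with Jeffreys (Dirichlet-1/2) priors over alphabets of
sizes `α`, `β`, `αβ`, the log Bayes factor satisfies
`log[Qⁿ(i,j)/(Qⁿ(i)Qⁿ(j))] = n·Iⁿ(i,j) - ((α-1)(β-1)/2)·log n + O(1)`, uniformly over
counts, where `Iⁿ(i,j)` is the empirical mutual information. -/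
theorem log_bayes_factor_asymptotics (α β : ℕ) (hα : 2 ≤ α) (hβ : 2 ≤ β) :
    ∃ C : ℝ, ∀ n : ℕ, 1 ≤ n → ∀ c : Fin α × Fin β → ℕ, ∑ z, c z = n →
      ∀ c₁ : Fin α → ℕ, (∀ x, c₁ x = ∑ y, c (x, y)) →
      ∀ c₂ : Fin β → ℕ, (∀ y, c₂ y = ∑ x, c (x, y)) →
      |Real.log
          ((Real.Gamma ((α * β : ℕ) / 2) / Real.Gamma (n + (α * β : ℕ) / 2) *
              ∏ z : Fin α × Fin β, Real.Gamma (c z + 1/2) / Real.Gamma (1/2)) /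
            ((Real.Gamma (α / 2) / Real.Gamma (n + α / 2) *
                ∏ x, Real.Gamma (c₁ x + 1/2) / Real.Gamma (1/2)) *
             (Real.Gamma (β / 2) / Real.Gamma (n + β / 2) *
                ∏ y, Real.Gamma (c₂ y + 1/2) / Real.Gamma (1/2))))
        - ((n : ℝ) * (∑ x, ∑ y, ((c (x, y) : ℝ) / n) *
              Real.log (((c (x, y) : ℝ) / n) / (((c₁ x : ℝ) / n) * ((c₂ y : ℝ) / n))))
            - ((α : ℝ) - 1) * ((β : ℝ) - 1) / 2 * Real.log n)| ≤ C := by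
  have : Nonempty (Fin α) := Fin.pos_iff_nonempty.1 (by omega)
  have : Nonempty (Fin β) := Fin.pos_iff_nonempty.1 (by omega)
  obtain ⟨C, hC⟩ := exists_abs_log_jeffreys_bayes_factor_sub_le (ι := Fin α) (κ := Fin β)
  refine ⟨C, fun n _ c hc c₁ hc₁ c₂ hc₂ => ?_⟩
  simpa only [jeffreysMarginal, Fintype.card_prod, Fintype.card_fin] using
    hC n c hc c₁ hc₁ c₂ hc₂
end

section
/- In the setting of the previous three-variable model, if additionally each sample's X_1 value is missing independently with probability δ satisfying (H((1-ε)²+ε²) - H(ε))/(log 2 - H(ε)) < δ < 1, then (1-δ)(log 2 - H(ε)) < log 2 - H((1-ε)²+ε²); consequently the weights J(1,2) = J(1,3) = (1-δ)(log 2 - H(ε)) and J(2,3) = log 2 - H((1-ε)²+ε²) used by the posterior-maximizing forest algorithm satisfy J(2,3) > J(1,2), so the algorithm selects the edge {2,3} first and recovers an incorrect forest, even though I(1,2)=I(1,3) > I(2,3). -/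
open Real

lemma hbin (H : ℝ → ℝ) (hH : ∀ t, H t = -(t * Real.log t) - (1 - t) * Real.log (1 - t)) :
    ∀ t, H t = Real.binEntropy t := by
  intro t
  rw [hH, Real.binEntropy, Real.log_inv, Real.log_inv]; ring

/-- In the three-variable model, if `X₁` is missing with probability `δ`
satisfying `(H((1-ε)²+ε²) - H(ε))/(log 2 - H(ε)) < δ < 1`, then
`(1-δ)(log 2 - H(ε)) < log 2 - H((1-ε)²+ε²)`; hence the asymptotic posterior scores
`J(1,2) = J(1,3) = (1-δ)(log 2 - H(ε))` and `J(2,3) = log 2 - H((1-ε)²+ε²)` satisfy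
`J(2,3) > J(1,2) = J(1,3)`, so the posterior-maximizing algorithm connects `{2,3}`
first — an incorrect forest — even though `I(1,2) = I(1,3) > I(2,3)`. -/
theorem incomplete_data_posterior_inconsistency
    (ε δ : ℝ) (hε0 : 0 < ε) (hε : ε < 1/2)
    (H : ℝ → ℝ) (hH : ∀ t, H t = -(t * Real.log t) - (1 - t) * Real.log (1 - t))
    (hδ1 : (H ((1 - ε) ^ 2 + ε ^ 2) - H ε) / (Real.log 2 - H ε) < δ) (hδ2 : δ < 1)
    (J12 J13 J23 I12 I13 I23 : ℝ)
    (hJ12 : J12 = (1 - δ) * (Real.log 2 - H ε))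
    (hJ13 : J13 = (1 - δ) * (Real.log 2 - H ε))
    (hJ23 : J23 = Real.log 2 - H ((1 - ε) ^ 2 + ε ^ 2))
    (hI12 : I12 = Real.log 2 - H ε) (hI13 : I13 = Real.log 2 - H ε)
    (hI23 : I23 = Real.log 2 - H ((1 - ε) ^ 2 + ε ^ 2)) :
    (1 - δ) * (Real.log 2 - H ε) < Real.log 2 - H ((1 - ε) ^ 2 + ε ^ 2) ∧
      J12 < J23 ∧ J13 < J23 ∧ I23 < I12 ∧ I23 < I13 := by
  have hB := hbin H hH
  have hq : (1 - ε) ^ 2 + ε ^ 2 = 1 - 2 * ε * (1 - ε) := by ring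
  -- H ε < log 2
  have h1 : H ε < Real.log 2 := by
    rw [hB]; exact Real.binEntropy_lt_log_two.2 (by intro h; rw [h] at hε; norm_num at hε)
  have hpos : 0 < Real.log 2 - H ε := by linarith
  -- H ε < H q
  have h2 : H ε < H ((1 - ε) ^ 2 + ε ^ 2) := by
    rw [hB, hB, hq, show (1 : ℝ) - 2 * ε * (1 - ε) = 1 - (2 * ε * (1 - ε)) from rfl,
      Real.binEntropy_one_sub]
    apply Real.binEntropy_strictMonoOn
    · exact Set.mem_Icc.mpr ⟨by linarith, by rw [show (2:ℝ)⁻¹ = 1/2 by norm_num]; linarith⟩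
    · refine Set.mem_Icc.mpr ⟨by nlinarith, ?_⟩
      rw [show (2:ℝ)⁻¹ = 1/2 by norm_num]; nlinarith [sq_nonneg (1 - 2*ε)]
    · nlinarith
  have key : H ((1 - ε) ^ 2 + ε ^ 2) - H ε < δ * (Real.log 2 - H ε) :=
    (div_lt_iff₀ hpos).mp hδ1
  have main : (1 - δ) * (Real.log 2 - H ε) < Real.log 2 - H ((1 - ε) ^ 2 + ε ^ 2) := by
    nlinarith
  refine ⟨main, ?_, ?_, ?_, ?_⟩ <;> subst hJ12 hJ13 hJ23 hI12 hI13 hI23 <;> linarith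
end
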